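/- Let w̄(t,x₁) be the solution of the Burgers equation constructed from initial data w̄_0(x₁) = (w_++w_-)/2 + ((w_+-w_-)/2) k_0 arctan(x₁) · (2/π)-normalized, with w_- < w_+, via characteristics x₁ = x_0 + w̄_0(x_0) t. Then for every q ∈ [1,∞] there is C_q > 0 such that ‖∂_{x₁} w̄(t,·)‖_{L^q(ℝ)} ≤ C_q min{ w_+ - w_-, (w_+-w_-)^{1/q} (1+t)^{-1+1/q} } for all t ≥ 0. -/

import Mathlib

open MeasureTheory ENNReal

/-- Smoothed Riemann data `w̄₀(x) = (w₊+w₋)/2 + ((w₊-w₋)/2)·(2/π)·arctan x`. -/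
noncomputable def smoothedData13 (wm wp : ℝ) (x : ℝ) : ℝ :=
  (wp + wm) / 2 + (wp - wm) / 2 * (2 / Real.pi) * Real.arctan x

/-!
The characteristic map `G y = y + w̄₀(y) t` has derivative `1 + w̄₀'(y) t ≥ 1`, so it is an
increasing bijection and `x ↦ X t x` is its inverse. Along characteristics
`∂ₓ w̄(t, G y) = w̄₀'(y) / (1 + w̄₀'(y) t)`, which is at most `a / (1 + a t)` for `a = sup w̄₀' = (w₊ - w₋) / π`.
Changing variables `x = G y` gives
`∫ |∂ₓ w̄|^q dx = ∫ w̄₀' (w̄₀' / (1 + w̄₀' t))^(q-1) dy ≤ (w₊ - w₋) (a / (1 + a t))^(q-1)`,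
and both bounds of the theorem follow from `a / (1 + a t) ≤ min (a, max 1 a / (1 + t))`.
-/

open Real Function Filter

section Inverse

variable {G G' X : ℝ → ℝ}

lemma hasDerivAt_of_rightInverse (hG : ∀ y, HasDerivAt G (G' y) y) (hG' : ∀ y, 0 < G' y)
    (hX : RightInverse X G) (x : ℝ) : HasDerivAt X (G' (X x))⁻¹ x := by
  have hGmono : StrictMono G := strictMono_of_deriv_pos fun y => (hG y).deriv ▸ hG' y
  have hXmono : Monotone X := fun x x' hxx' => hGmono.le_iff_le.mp (by rwa [hX x, hX x'])
  have hXsurj : Surjective X := fun y => ⟨G y, hGmono.injective (hX (G y))⟩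
  exact (hG (X x)).of_local_left_inverse (hXmono.continuous_of_surjective hXsurj).continuousAt
    (hG' _).ne' (Eventually.of_forall hX)

lemma lintegral_comp_of_rightInverse (hG : ∀ y, HasDerivAt G (G' y) y) (hinj : Injective G)
    (hX : RightInverse X G) (f : ℝ → ℝ≥0∞) :
    ∫⁻ x, f (X x) = ∫⁻ y, ENNReal.ofReal |G' y| * f y := by
  have hXG : ∀ y, X (G y) = y := fun y => hinj (hX (G y))
  have h := lintegral_image_eq_lintegral_abs_deriv_mul MeasurableSet.univ
    (fun y _ => (hG y).hasDerivWithinAt) hinj.injOn (fun x => f (X x))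
  simpa only [Set.image_univ, hX.surjective.range_eq, Measure.restrict_univ, hXG] using h

end Inverse

lemma div_one_add_mul_le_div_one_add_mul {a b t : ℝ} (hb : 0 ≤ b) (hba : b ≤ a) (ht : 0 ≤ t) :
    b / (1 + b * t) ≤ a / (1 + a * t) := by
  rw [div_le_div_iff₀ (by positivity) (by nlinarith)]
  nlinarith

lemma one_add_mul_mul_rpow_le {a b t q : ℝ} (hb : 0 ≤ b) (hba : b ≤ a) (ht : 0 ≤ t)
    (hq : 1 ≤ q) :
    (1 + b * t) * (b / (1 + b * t)) ^ q ≤ b * (a / (1 + a * t)) ^ (q - 1) := by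
  have hd : 0 < 1 + b * t := by positivity
  have hsplit := rpow_add_one' (x := b / (1 + b * t)) (y := q - 1) (by positivity)
    (by rw [sub_add_cancel]; linarith)
  rw [sub_add_cancel] at hsplit
  calc (1 + b * t) * (b / (1 + b * t)) ^ q = b * (b / (1 + b * t)) ^ (q - 1) := by
        rw [hsplit]; field_simp
    _ ≤ b * (a / (1 + a * t)) ^ (q - 1) := mul_le_mul_of_nonneg_left
        (rpow_le_rpow (by positivity) (div_one_add_mul_le_div_one_add_mul hb hba ht)
          (by linarith)) hb

section Characteristics

variable {w₀ w₀' X : ℝ → ℝ} {t a V : ℝ}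

lemma hasDerivAt_comp_of_characteristic (hw : ∀ y, HasDerivAt w₀ (w₀' y) y)
    (hw0 : ∀ y, 0 ≤ w₀' y) (ht : 0 ≤ t) (hX : ∀ x, X x + w₀ (X x) * t = x) (x : ℝ) :
    HasDerivAt (fun y => w₀ (X y)) (w₀' (X x) / (1 + w₀' (X x) * t)) x := by
  have hG : ∀ y, HasDerivAt (fun z => z + w₀ z * t) (1 + w₀' y * t) y :=
    fun y => (hasDerivAt_id y).add ((hw y).mul_const t)
  have hG' : ∀ y, 0 < 1 + w₀' y * t := fun y => by have := mul_nonneg (hw0 y) ht; linarith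
  rw [div_eq_mul_inv]
  exact (hw (X x)).comp x (hasDerivAt_of_rightInverse hG hG' hX x)

lemma eLpNorm_top_deriv_comp_le (hw : ∀ y, HasDerivAt w₀ (w₀' y) y) (hw0 : ∀ y, 0 ≤ w₀' y)
    (hwa : ∀ y, w₀' y ≤ a) (ht : 0 ≤ t) (hX : ∀ x, X x + w₀ (X x) * t = x) :
    eLpNorm (fun x => deriv (fun y => w₀ (X y)) x) ∞ volume
      ≤ ENNReal.ofReal (a / (1 + a * t)) := by
  rw [eLpNorm_exponent_top]
  refine eLpNormEssSup_le_of_ae_bound (Eventually.of_forall fun x => ?_)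
  have hd : 0 < 1 + w₀' (X x) * t := by have := mul_nonneg (hw0 (X x)) ht; linarith
  rw [(hasDerivAt_comp_of_characteristic hw hw0 ht hX x).deriv,
    Real.norm_of_nonneg (div_nonneg (hw0 _) hd.le)]
  exact div_one_add_mul_le_div_one_add_mul (hw0 _) (hwa _) ht

lemma lintegral_rpow_deriv_comp_le (hw : ∀ y, HasDerivAt w₀ (w₀' y) y) (hw0 : ∀ y, 0 ≤ w₀' y)
    (hwa : ∀ y, w₀' y ≤ a) (hV : ∫⁻ y, ENNReal.ofReal (w₀' y) ≤ ENNReal.ofReal V) (ht : 0 ≤ t)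
    (hX : ∀ x, X x + w₀ (X x) * t = x) {q : ℝ} (hq : 1 ≤ q) :
    ∫⁻ x, ‖deriv (fun y => w₀ (X y)) x‖ₑ ^ q
      ≤ ENNReal.ofReal (V * (a / (1 + a * t)) ^ (q - 1)) := by
  have hd : ∀ y, 0 < 1 + w₀' y * t := fun y => by have := mul_nonneg (hw0 y) ht; linarith
  have hF : ∀ y, 0 ≤ w₀' y / (1 + w₀' y * t) := fun y => div_nonneg (hw0 y) (hd y).le
  have hG : ∀ y, HasDerivAt (fun z => z + w₀ z * t) (1 + w₀' y * t) y :=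
    fun y => (hasDerivAt_id y).add ((hw y).mul_const t)
  have hinj : Injective (fun z => z + w₀ z * t) :=
    (strictMono_of_deriv_pos fun y => (hG y).deriv ▸ hd y).injective
  have hc : 0 ≤ (a / (1 + a * t)) ^ (q - 1) := by
    have := (hw0 0).trans (hwa 0)
    positivity
  calc ∫⁻ x, ‖deriv (fun y => w₀ (X y)) x‖ₑ ^ q
      = ∫⁻ x, ENNReal.ofReal ((w₀' (X x) / (1 + w₀' (X x) * t)) ^ q) := by
        congr with x
        rw [(hasDerivAt_comp_of_characteristic hw hw0 ht hX x).deriv, ← ofReal_norm,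
          Real.norm_of_nonneg (hF _), ofReal_rpow_of_nonneg (hF _) (by linarith)]
    _ = ∫⁻ y, ENNReal.ofReal |1 + w₀' y * t| * ENNReal.ofReal ((w₀' y / (1 + w₀' y * t)) ^ q) :=
        lintegral_comp_of_rightInverse hG hinj hX
          fun y => ENNReal.ofReal ((w₀' y / (1 + w₀' y * t)) ^ q)
    _ ≤ ∫⁻ y, ENNReal.ofReal (w₀' y) * ENNReal.ofReal ((a / (1 + a * t)) ^ (q - 1)) := by
        refine lintegral_mono fun y => ?_
        rw [← ofReal_mul (abs_nonneg _), ← ofReal_mul (hw0 y), abs_of_pos (hd y)]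
        exact ofReal_le_ofReal (one_add_mul_mul_rpow_le (hw0 y) (hwa y) ht hq)
    _ ≤ ENNReal.ofReal V * ENNReal.ofReal ((a / (1 + a * t)) ^ (q - 1)) := by
        rw [lintegral_mul_const' _ _ ofReal_ne_top]
        gcongr
    _ = ENNReal.ofReal (V * (a / (1 + a * t)) ^ (q - 1)) := (ofReal_mul' hc).symm

lemma eLpNorm_deriv_comp_le (hw : ∀ y, HasDerivAt w₀ (w₀' y) y) (hw0 : ∀ y, 0 ≤ w₀' y)
    (hwa : ∀ y, w₀' y ≤ a) (hV0 : 0 ≤ V) (hV : ∫⁻ y, ENNReal.ofReal (w₀' y) ≤ ENNReal.ofReal V)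
    (ht : 0 ≤ t) (hX : ∀ x, X x + w₀ (X x) * t = x) {p : ℝ≥0∞} (hp : 1 ≤ p) :
    eLpNorm (fun x => deriv (fun y => w₀ (X y)) x) p volume
      ≤ ENNReal.ofReal (V ^ p.toReal⁻¹ * (a / (1 + a * t)) ^ (1 - p.toReal⁻¹)) := by
  rcases eq_or_ne p ∞ with rfl | hptop
  · simpa using eLpNorm_top_deriv_comp_le hw hw0 hwa ht hX
  set q := p.toReal
  have hq : 1 ≤ q := by simpa using ENNReal.toReal_mono hptop hp
  have hc : 0 ≤ a / (1 + a * t) := by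
    have := (hw0 0).trans (hwa 0)
    positivity
  rw [eLpNorm_eq_lintegral_rpow_enorm_toReal (by positivity) hptop]
  calc (∫⁻ x, ‖deriv (fun y => w₀ (X y)) x‖ₑ ^ q) ^ (1 / q)
      ≤ ENNReal.ofReal (V * (a / (1 + a * t)) ^ (q - 1)) ^ (1 / q) := by
        gcongr
        exact lintegral_rpow_deriv_comp_le hw hw0 hwa hV ht hX hq
    _ = ENNReal.ofReal (V ^ q⁻¹ * (a / (1 + a * t)) ^ (1 - q⁻¹)) := by
        rw [ofReal_rpow_of_nonneg (by positivity) (by positivity),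
          mul_rpow hV0 (by positivity), ← rpow_mul hc, one_div]
        congr 3
        field_simp

end Characteristics

lemma hasDerivAt_smoothedData13 (wm wp y : ℝ) :
    HasDerivAt (smoothedData13 wm wp) ((wp - wm) / π / (1 + y ^ 2)) y := by
  refine ((hasDerivAt_arctan y).const_mul ((wp - wm) / 2 * (2 / π))).const_add _ |>.congr_deriv ?_
  field_simp

lemma lintegral_deriv_smoothedData13 {wm wp : ℝ} (h : wm ≤ wp) :
    ∫⁻ y, ENNReal.ofReal ((wp - wm) / π / (1 + y ^ 2)) = ENNReal.ofReal (wp - wm) := by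
  have ha : 0 ≤ (wp - wm) / π := div_nonneg (sub_nonneg.2 h) pi_pos.le
  simp_rw [div_eq_mul_inv ((wp - wm) / π), ofReal_mul ha]
  rw [lintegral_const_mul' _ _ ofReal_ne_top,
    ← ofReal_integral_eq_lintegral_ofReal integrable_inv_one_add_sq
      (Eventually.of_forall fun y => by positivity),
    integral_univ_inv_one_add_sq, ← ofReal_mul ha]
  congr 1
  field_simp

lemma rpow_mul_rpow_div_le_mul_min {a V t r : ℝ} (ha : 0 ≤ a) (haV : a ≤ V) (ht : 0 ≤ t)
    (hr0 : 0 ≤ r) (hr1 : r ≤ 1) :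
    V ^ r * (a / (1 + a * t)) ^ (1 - r) ≤ max 1 a * min V (V ^ r * (1 + t) ^ (-1 + r)) := by
  have hcM : a / (1 + a * t) ≤ max 1 a / (1 + t) := by
    rw [div_le_div_iff₀ (by positivity) (by positivity)]
    rcases le_total a 1 with h1 | h1
    · rw [max_eq_left h1]; nlinarith
    · rw [max_eq_right h1]; nlinarith [mul_nonneg (mul_nonneg ha ht) (sub_nonneg.2 h1)]
  set M := max 1 a
  have hM1 : 1 ≤ M := le_max_left _ _
  have hV0 : 0 ≤ V := ha.trans haV
  have hc : a / (1 + a * t) ≤ a := div_le_self ha (by nlinarith)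
  rw [mul_min_of_nonneg _ _ (by positivity)]
  refine le_min ?_ ?_
  · calc V ^ r * (a / (1 + a * t)) ^ (1 - r) ≤ V ^ r * V ^ (1 - r) := by
          gcongr
          exact hc.trans haV
      _ = V := by rw [← rpow_add' hV0 (by norm_num), add_sub_cancel, Real.rpow_one]
      _ ≤ M * V := le_mul_of_one_le_left hV0 hM1
  · calc V ^ r * (a / (1 + a * t)) ^ (1 - r) ≤ V ^ r * (M / (1 + t)) ^ (1 - r) := by
          gcongr
      _ = V ^ r * (M ^ (1 - r) * (1 + t) ^ (-1 + r)) := by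
          rw [div_rpow (by positivity) (by positivity), div_eq_mul_inv, ← rpow_neg (by positivity),
            neg_sub, sub_eq_neg_add r]
      _ ≤ V ^ r * (M * (1 + t) ^ (-1 + r)) := by
          gcongr
          exact rpow_le_self_of_one_le hM1 (by linarith)
      _ = M * (V ^ r * (1 + t) ^ (-1 + r)) := by ring

theorem stmt_13 (wm wp : ℝ) (h : wm < wp) (X : ℝ → ℝ → ℝ)
    (hchar : ∀ t x : ℝ, 0 ≤ t → x = X t x + smoothedData13 wm wp (X t x) * t) :
    ∀ p : ℝ≥0∞, 1 ≤ p →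
      ∃ C : ℝ, 0 < C ∧
        ∀ t : ℝ, 0 ≤ t →
          (eLpNorm (fun x => deriv (fun y => smoothedData13 wm wp (X t y)) x)
              p volume).toReal
            ≤ C * min (wp - wm)
                ((wp - wm) ^ (p.toReal⁻¹) * (1 + t) ^ (-1 + p.toReal⁻¹)) := by
  intro p hp
  set a := (wp - wm) / π
  have hV0 : 0 ≤ wp - wm := sub_nonneg.2 h.le
  have ha0 : 0 ≤ a := div_nonneg hV0 pi_pos.le
  have haV : a ≤ wp - wm := div_le_self hV0 (by linarith [pi_gt_three])
  have hwa : ∀ y : ℝ, a / (1 + y ^ 2) ≤ a := fun y => div_le_self ha0 (by nlinarith)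
  have hr1 : p.toReal⁻¹ ≤ 1 := by
    rcases eq_or_ne p ∞ with rfl | hptop
    · simp
    · exact inv_le_one_of_one_le₀ (by simpa using ENNReal.toReal_mono hptop hp)
  refine ⟨max 1 a, lt_max_of_lt_left one_pos, fun t ht => ?_⟩
  have hX : ∀ x, X t x + smoothedData13 wm wp (X t x) * t = x := fun x => (hchar t x ht).symm
  have hL := eLpNorm_deriv_comp_le (hasDerivAt_smoothedData13 wm wp) (fun y => by positivity)
    hwa hV0 (lintegral_deriv_smoothedData13 h.le).le ht hX hp
  calc _ ≤ (wp - wm) ^ p.toReal⁻¹ * (a / (1 + a * t)) ^ (1 - p.toReal⁻¹) :=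
        toReal_le_of_le_ofReal (by positivity) hL
    _ ≤ _ := rpow_mul_rpow_div_le_mul_min ha0 haV ht (by positivity) hr1
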